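/- arXiv:0906.4868 — 2 statements merged into one kernel-verified Lean document; each statement's English description precedes it below -/
import Mathlib

section
/- Let p be a prime, r ≥ 2 an integer, n a natural number, and k a natural number; write Z_p(n) = αr + β with 0 ≤ β < r (i.e. β = Z_p(n) mod r). Then Z_{p^r}(n+1) - Z_{p^r}(n) = k if and only if n+1 = p^m · a with a coprime to p and kr ≤ m + β < (k+1)r, i.e. if and only if the p-adic valuation m of n+1 satisfies kr ≤ m + β < (k+1)r. -/
/-- `Z b n` is the number of trailing zeroes of the base-`b` expansion of `n!`,
i.e. the largest `k` such that `b ^ k ∣ n!`. -/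
def Z (b n : ℕ) : ℕ := padicValNat b (Nat.factorial n)

/-! Since `Z (p ^ r) n = ⌊Z p n / r⌋` and `Z p (n + 1) = v_p(n + 1) + Z p n`, writing
`Z p n = α r + β` the jump `Z (p ^ r) (n + 1) - Z (p ^ r) n` equals `⌊(v_p(n + 1) + β) / r⌋`. -/

theorem Nat.div_eq_iff_mul_le_and_lt_succ_mul {r x k : ℕ} (hr : 0 < r) :
    x / r = k ↔ k * r ≤ x ∧ x < (k + 1) * r := by
  rw [Nat.div_eq_iff hr, Nat.succ_mul]
  omega

theorem Nat.add_div_sub_div {r : ℕ} (hr : 0 < r) (m v : ℕ) :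
    (m + v) / r - v / r = (m + v % r) / r := by
  rw [← Nat.mod_add_div v r, ← add_assoc, Nat.add_mul_div_left _ _ hr, Nat.mod_add_div,
    Nat.add_sub_cancel]

theorem padicValNat_pow_left {b r x : ℕ} (hb : b ≠ 1) (hr : 0 < r) (hx : x ≠ 0) :
    padicValNat (b ^ r) x = padicValNat b x / r := by
  have hbr : b ^ r ≠ 1 := by simp [hb, hr.ne']
  refine eq_of_forall_le_iff fun k => ?_
  rw [Nat.le_div_iff_mul_le hr, ← padicValNat_dvd_iff_le_of_ne_one hbr hx,
    ← padicValNat_dvd_iff_le_of_ne_one hb hx, ← pow_mul']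

theorem padicValNat_eq_iff_exists_coprime {p x m : ℕ} (hp : p.Prime) (hx : x ≠ 0) :
    padicValNat p x = m ↔ ∃ a, p.Coprime a ∧ x = p ^ m * a := by
  have := Fact.mk hp
  constructor
  · rintro rfl
    rw [← Nat.factorization_def x hp]
    exact ⟨_, Nat.coprime_ordCompl hp hx, (Nat.ordProj_mul_ordCompl_eq_self x p).symm⟩
  · rintro ⟨a, hpa, rfl⟩
    have ha : a ≠ 0 := by
      rintro rfl
      simp at hx
    rw [padicValNat.mul (pow_ne_zero _ hp.ne_zero) ha, padicValNat.prime_pow,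
      padicValNat.eq_zero_of_not_dvd (hp.coprime_iff_not_dvd.mp hpa), add_zero]

theorem Z_pow_left {b r : ℕ} (hb : b ≠ 1) (hr : 0 < r) (n : ℕ) : Z (b ^ r) n = Z b n / r :=
  padicValNat_pow_left hb hr n.factorial_ne_zero

theorem Z_succ {p : ℕ} (hp : p.Prime) (n : ℕ) :
    Z p (n + 1) = padicValNat p (n + 1) + Z p n := by
  have := Fact.mk hp
  exact padicValNat.mul n.succ_ne_zero n.factorial_ne_zero

theorem Z_prime_pow_succ_sub {p r : ℕ} (hp : p.Prime) (hr : 0 < r) (n : ℕ) :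
    Z (p ^ r) (n + 1) - Z (p ^ r) n = (padicValNat p (n + 1) + Z p n % r) / r := by
  rw [Z_pow_left hp.ne_one hr, Z_pow_left hp.ne_one hr, Z_succ hp, Nat.add_div_sub_div hr]

theorem Z_prime_pow_jump_amplitude (p r n k : ℕ) (hp : p.Prime) (hr : 2 ≤ r) :
    Z (p ^ r) (n + 1) - Z (p ^ r) n = k ↔
      ∃ m a, Nat.Coprime p a ∧ n + 1 = p ^ m * a ∧
        k * r ≤ m + Z p n % r ∧ m + Z p n % r < (k + 1) * r := by
  have hr : 0 < r := by omega
  have hval := fun m => padicValNat_eq_iff_exists_coprime (m := m) hp n.succ_ne_zero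
  rw [Z_prime_pow_succ_sub hp hr, Nat.div_eq_iff_mul_le_and_lt_succ_mul hr]
  constructor
  · intro hk
    obtain ⟨a, hpa, ha⟩ := (hval _).mp rfl
    exact ⟨_, a, hpa, ha, hk⟩
  · rintro ⟨m, a, hpa, ha, hk⟩
    rwa [(hval m).mpr ⟨a, hpa, ha⟩]
end

section
/- Let p be a prime, r ≥ 2 an integer, and l a positive multiple of r with l < p. Then for all integers k > 1 and h with 1 ≤ h < k, the number (l/r) · Σ_{i=1}^{kr} p^{kr-i} - h = (l/r) · (p^{kr} - 1)/(p - 1) - h is not in the image of Z_{p^r}. -/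
open Nat Finset

lemma Z_monotone (b : ℕ) : Monotone (Z b) := by
  intro m n hmn
  rcases eq_or_ne b 1 with rfl | hb
  · simp [Z]
  · exact (padicValNat_dvd_iff_le_of_ne_one hb (factorial_ne_zero n)).mp
      (pow_padicValNat_dvd.trans (factorial_dvd_factorial hmn))

section PrimePower

variable {p : ℕ} [hp : Fact p.Prime]

lemma padicValNat_prime_pow_base {r x : ℕ} (hr : r ≠ 0) (hx : x ≠ 0) :
    padicValNat (p ^ r) x = padicValNat p x / r := by
  have hb : p ^ r ≠ 1 := (Nat.one_lt_pow hr hp.out.one_lt).ne'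
  rw [padicValNat_def' hb hx]
  apply multiplicity_eq_of_dvd_of_not_dvd
  · rw [← pow_mul, padicValNat_dvd_iff_le hx]
    exact Nat.mul_div_le _ r
  · rw [← pow_mul, padicValNat_dvd_iff_le hx, not_le]
    exact Nat.lt_mul_div_succ _ (Nat.pos_of_ne_zero hr)

lemma Z_prime_pow {r : ℕ} (hr : r ≠ 0) (n : ℕ) : Z (p ^ r) n = padicValNat p n ! / r :=
  padicValNat_prime_pow_base hr (factorial_ne_zero n)

lemma Z_prime_pow_succ {r n k : ℕ} (hr : r ≠ 0) (hn : padicValNat p (n + 1) = r * k) :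
    Z (p ^ r) (n + 1) = Z (p ^ r) n + k := by
  rw [Z_prime_pow hr, Z_prime_pow hr, factorial_succ,
    padicValNat.mul (succ_ne_zero n) (factorial_ne_zero n), hn, add_comm,
    Nat.add_mul_div_left _ _ (Nat.pos_of_ne_zero hr)]

lemma padicValNat_factorial_mul_prime_pow (a N : ℕ) :
    padicValNat p (a * p ^ N)! = padicValNat p a ! + a * ∑ i ∈ range N, p ^ i := by
  induction N with
  | zero => simp
  | succ N ih =>
    rw [pow_succ', mul_left_comm, padicValNat_factorial_mul, ih, sum_range_succ]
    ring

lemma padicValNat_factorial_of_lt {a : ℕ} (ha : a < p) : padicValNat p a ! = 0 := by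
  simpa using padicValNat_factorial_mul_add (p := p) 0 ha

end PrimePower

theorem family_not_in_image_multiple_general (p r l k h : ℕ) (hp : p.Prime)
    (hl0 : 0 < l) (hrl : r ∣ l) (hlp : l < p)
    (hh1 : 1 ≤ h) (hhk : h < k) :
    (l / r) * ((p ^ (k * r) - 1) / (p - 1)) - h ∉ Set.range (Z (p ^ r)) := by
  have : Fact p.Prime := ⟨hp⟩
  have hr : r ≠ 0 := (Nat.pos_of_dvd_of_pos hrl hl0).ne'
  set n := l * p ^ (k * r) - 1
  have hn : n + 1 = l * p ^ (k * r) := Nat.sub_add_cancel (Nat.mul_pos hl0 (pow_pos hp.pos _))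
  have hval : padicValNat p (n + 1) = r * k := by
    rw [hn, padicValNat.mul hl0.ne' (pow_pos hp.pos _).ne', padicValNat.prime_pow,
      padicValNat.eq_zero_of_not_dvd (Nat.not_dvd_of_pos_of_lt hl0 hlp), zero_add, mul_comm]
  have hZ_succ : Z (p ^ r) (n + 1) = l / r * ((p ^ (k * r) - 1) / (p - 1)) := by
    rw [Z_prime_pow hr, hn, padicValNat_factorial_mul_prime_pow, padicValNat_factorial_of_lt hlp,
      zero_add, Nat.geomSum_eq hp.two_le, Nat.div_mul_right_comm hrl]
  have hjump := Z_prime_pow_succ hr hval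
  rintro ⟨m, hm⟩
  exact (Z_monotone _).ne_of_lt_of_lt_nat n (by omega) (by omega) m hm

theorem family_not_in_image_multiple (p r l k h : ℕ) (hp : p.Prime) (hr : 2 ≤ r)
    (hl0 : 0 < l) (hrl : r ∣ l) (hlp : l < p) (hk : 1 < k)
    (hh1 : 1 ≤ h) (hhk : h < k) :
    (l / r) * ((p ^ (k * r) - 1) / (p - 1)) - h ∉ Set.range (Z (p ^ r)) :=
  family_not_in_image_multiple_general p r l k h hp hl0 hrl hlp hh1 hhk
end
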